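/- arXiv:cs/0608011 — 2 statements merged into one kernel-verified Lean document; each statement's English description precedes it below -/
import Mathlib

section
/- Every monotonic operator F on a complete lattice D is order independent: if R is a relaxation of F and α is an ordinal with R^{α+1} = R^α, then R^α equals the greatest fixpoint of F. In particular, any two outcomes of relaxations of F coincide. -/
universe u

/-- Transfinite iterations of an operator on a complete lattice:
`F^0 = ⊤`, `F^(α+1) = F (F^α)`, and `F^β = ⨅_{α<β} F^α` for limit `β`. -/
noncomputable def iterate {D : Type u} [CompleteLattice D] (F : D → D) (α : Ordinal.{0}) : D :=
  Ordinal.limitRecOn α ⊤ (fun _ ih => F ih) (fun β _ ih => ⨅ (γ : Ordinal) (h : γ < β), ih γ h)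

/-- `R` is a relaxation of `F`. -/
def Relaxation {D : Type u} [CompleteLattice D] (F R : D → D) : Prop :=
  ∀ α : Ordinal.{0},
    F (iterate R α) ≤ R (iterate R α) ∧
    (F (iterate R α) ≤ iterate R α → R (iterate R α) ≤ iterate R α) ∧
    (R (iterate R α) = iterate R α → F (iterate R α) = iterate R α)

section Games

variable {n : ℕ} {T : Fin n → Type u}

/-- `GR` operator: strategies that are a best response *in the initial game* to
some opponent belief held in `G`. -/
def GR (p : ∀ i : Fin n, (∀ j, T j) → ℝ) (G : ∀ i, Set (T i)) : ∀ i, Set (T i) :=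
  fun i => {s : T i | ∃ μ : ∀ j, T j, (∀ j, j ≠ i → μ j ∈ G j) ∧
    ∀ s' : T i, p i (Function.update μ i s') ≤ p i (Function.update μ i s)}

/-- `LR` operator: strategies that are a best response *in `G`* to
some opponent belief held in `G`. -/
def LR (p : ∀ i : Fin n, (∀ j, T j) → ℝ) (G : ∀ i, Set (T i)) : ∀ i, Set (T i) :=
  fun i => {s : T i | ∃ μ : ∀ j, T j, (∀ j, j ≠ i → μ j ∈ G j) ∧
    ∀ s' ∈ G i, p i (Function.update μ i s') ≤ p i (Function.update μ i s)}

/-- `s'` strictly dominates `s` on the restriction `G`. -/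
def Dom (p : ∀ i : Fin n, (∀ j, T j) → ℝ) (G : ∀ i, Set (T i)) (i : Fin n)
    (s' s : T i) : Prop :=
  ∀ μ : ∀ j, T j, (∀ j, j ≠ i → μ j ∈ G j) →
    p i (Function.update μ i s) < p i (Function.update μ i s')

/-- `GS` operator: strategies not strictly dominated on `G` by any strategy of the initial game. -/
def GS (p : ∀ i : Fin n, (∀ j, T j) → ℝ) (G : ∀ i, Set (T i)) : ∀ i, Set (T i) :=
  fun i => {s : T i | ¬ ∃ s' : T i, Dom p G i s' s}

/-- `LS` operator: strategies not strictly dominated on `G` by any strategy in `G`. -/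
def LS (p : ∀ i : Fin n, (∀ j, T j) → ℝ) (G : ∀ i, Set (T i)) : ∀ i, Set (T i) :=
  fun i => {s : T i | ¬ ∃ s' ∈ G i, Dom p G i s' s}

/-- Property B: to each belief in the initial game a best response (in the initial game) exists. -/
def PropB (p : ∀ i : Fin n, (∀ j, T j) → ℝ) : Prop :=
  ∀ (i : Fin n) (μ : ∀ j, T j), ∃ s : T i, ∀ s' : T i,
    p i (Function.update μ i s') ≤ p i (Function.update μ i s)

/-- Property D(α). -/
def PropD (p : ∀ i : Fin n, (∀ j, T j) → ℝ) (α : Ordinal.{0}) : Prop :=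
  ∀ R : (∀ i, Set (T i)) → (∀ i, Set (T i)), Relaxation (fun G => LS p G ⊓ G) R →
    ∀ (i : Fin n) (s : T i), (∃ s' : T i, Dom p (iterate R α) i s' s) →
      ∃ s' ∈ iterate R α i, Dom p (iterate R α) i s' s

/-- Property C(α). -/
def PropC (p : ∀ i : Fin n, (∀ j, T j) → ℝ) (α : Ordinal.{0}) : Prop :=
  ∀ R : (∀ i, Set (T i)) → (∀ i, Set (T i)), Relaxation (fun G => LS p G ⊓ G) R →
    ∀ (i : Fin n) (s : T i), (∃ s' : T i, Dom p (iterate R α) i s' s) →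
      ∃ s'' : T i, Dom p (iterate R α) i s'' s ∧ ¬ ∃ s' : T i, Dom p (iterate R α) i s' s''

end Games

set_option linter.unusedVariables false

/-!
Every fixpoint `G` of `F` lies below every iterate `R^β`, by transfinite induction: at successors
`G = F G ≤ F R^β ≤ R R^β` by monotonicity and the first relaxation axiom, and at limits `R^β` is an
infimum. At a closure ordinal `R^α` is a fixpoint of `R`, hence of `F` by the third axiom.
-/

section Iterate

variable {D : Type u} [CompleteLattice D]

@[simp]
theorem iterate_zero (R : D → D) : iterate R 0 = ⊤ := by
  simp [iterate]

@[simp]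
theorem iterate_succ (R : D → D) (β : Ordinal.{0}) : iterate R (β + 1) = R (iterate R β) := by
  simp [iterate]

theorem iterate_limit (R : D → D) {β : Ordinal.{0}} (hβ : Order.IsSuccLimit β) :
    iterate R β = ⨅ (γ : Ordinal) (_ : γ < β), iterate R γ := by
  rw [iterate, Ordinal.limitRecOn_limit _ _ _ _ hβ]
  rfl

theorem le_iterate_of_le_map {F R : D → D} (hF : Monotone F)
    (hFR : ∀ β, F (iterate R β) ≤ R (iterate R β)) {G : D} (hG : G ≤ F G) (β : Ordinal.{0}) :
    G ≤ iterate R β := by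
  induction β using Ordinal.limitRecOn with
  | zero => simp
  | add_one β ih => simpa using hG.trans ((hF ih).trans (hFR β))
  | limit β hβ ih =>
    rw [iterate_limit R hβ]
    exact le_iInf₂ ih

end Iterate

theorem stmt_4 {D : Type u} [CompleteLattice D] (F : D → D)
    (hmono : ∀ G₁ G₂ : D, G₁ ≤ G₂ → F G₁ ≤ F G₂)
    (R : D → D) (hR : Relaxation F R) (α : Ordinal.{0})
    (hα : iterate R (α + 1) = iterate R α) :
    IsGreatest {G : D | F G = G} (iterate R α) := by
  have hRfix : R (iterate R α) = iterate R α := by rwa [iterate_succ] at hα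
  refine ⟨(hR α).2.2 hRfix, fun G hG => ?_⟩
  exact le_iterate_of_le_map (fun _ _ h => hmono _ _ h) (fun β => (hR β).1) (le_of_eq hG.symm) α
end

section
/- Let H be a strategic game in which every strategy type T i is finite. Then for all natural numbers k, GS^k = GS̄^k = LS̄^k = LS^k; moreover there exists a natural number k with GS^{k+1} = GS^k, so the outcomes of the four operators GS, GS̄, LS̄ and LS all exist and coincide. -/
universe u

section Aux

lemma my_iterate_zero {D : Type*} [CompleteLattice D] (F : D → D) : iterate F 0 = ⊤ := by
  unfold iterate
  exact Ordinal.limitRecOn_zero ..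

lemma my_iterate_succ {D : Type*} [CompleteLattice D] (F : D → D) (α : Ordinal.{0}) :
    iterate F (α + 1) = F (iterate F α) := by
  unfold iterate
  rw [Ordinal.add_one_eq_succ, Ordinal.limitRecOn_succ]

variable {n : ℕ} {T : Fin n → Type u} [∀ i, Nonempty (T i)] [∀ i, Finite (T i)]
  (p : ∀ i : Fin n, (∀ j, T j) → ℝ)

lemma Dom_anti {G G' : ∀ i, Set (T i)} (h : G ≤ G') {i : Fin n} {s' s : T i}
    (hd : Dom p G' i s' s) : Dom p G i s' s :=
  fun μ hμ => hd μ (fun j hj => h j (hμ j hj))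

lemma GS_mono {G G' : ∀ i, Set (T i)} (h : G ≤ G') : GS p G ≤ GS p G' :=
  fun i s hs hex => hs ⟨hex.choose, Dom_anti p h hex.choose_spec⟩

lemma GS_anti (k : ℕ) : iterate (GS p) ((k : Ordinal) + 1) ≤ iterate (GS p) (k : Ordinal) := by
  induction k with
  | zero =>
    rw [Nat.cast_zero, my_iterate_zero]
    exact le_top
  | succ k ih =>
    rw [Nat.cast_succ, my_iterate_succ (GS p) ((k : Ordinal) + 1)]
    calc GS p (iterate (GS p) ((k : Ordinal) + 1)) ≤ GS p (iterate (GS p) (k : Ordinal)) :=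
          GS_mono p ih
      _ = iterate (GS p) ((k : Ordinal) + 1) := (my_iterate_succ (GS p) (k : Ordinal)).symm

lemma key (X : ∀ i, Set (T i)) (hne : ∀ i, (X i).Nonempty) (i : Fin n) :
    (GS p X i).Nonempty ∧
    ∀ s : T i, (∃ s', Dom p X i s' s) → ∃ s'' ∈ GS p X i, Dom p X i s'' s := by
  classical
  have hμ₀ : ∃ μ : ∀ j, T j, ∀ j, μ j ∈ X j :=
    ⟨fun j => (hne j).choose, fun j => (hne j).choose_spec⟩
  obtain ⟨μ₀, hμ₀⟩ := hμ₀
  have hirr : ∀ s : T i, ¬ Dom p X i s s := fun s h =>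
    lt_irrefl _ (h μ₀ (fun j _ => hμ₀ j))
  have htr : ∀ a b c : T i, Dom p X i a b → Dom p X i b c → Dom p X i a c :=
    fun a b c hab hbc μ hμ => (hbc μ hμ).trans (hab μ hμ)
  have hwf : WellFounded (fun a b : T i => Dom p X i a b) := by
    letI : IsTrans (T i) (fun a b => Dom p X i a b) := ⟨htr⟩
    letI : IsIrrefl (T i) (fun a b => Dom p X i a b) := ⟨hirr⟩
    exact Finite.wellFounded_of_trans_of_irrefl _
  have hmin : ∀ s : T i, (∃ s', Dom p X i s' s) → ∃ s'' ∈ GS p X i, Dom p X i s'' s := by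
    intro s ⟨s', hs'⟩
    obtain ⟨m, hmS, hmmin⟩ := hwf.has_min {x | Dom p X i x s} ⟨s', hs'⟩
    refine ⟨m, ?_, hmS⟩
    rintro ⟨y, hy⟩
    exact hmmin y (htr y m s hy hmS) hy
  refine ⟨?_, hmin⟩
  obtain ⟨s⟩ := (inferInstance : Nonempty (T i))
  by_cases h : ∃ s', Dom p X i s' s
  · obtain ⟨s'', hs'', _⟩ := hmin s h
    exact ⟨s'', hs''⟩
  · exact ⟨s, h⟩

lemma LS_eq_GS (X : ∀ i, Set (T i)) (hne : ∀ i, (X i).Nonempty) (hsub : GS p X ≤ X) :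
    LS p X = GS p X := by
  funext i
  apply Set.eq_of_subset_of_subset
  · intro s hs
    intro hex
    obtain ⟨s'', hs'', hd⟩ := (key p X hne i).2 s hex
    exact hs ⟨s'', hsub i hs'', hd⟩
  · intro s hs ⟨s', _, hd⟩
    exact hs ⟨s', hd⟩

lemma main_lemma (k : ℕ) :
    iterate (GS p) (k : Ordinal) = iterate (fun G => GS p G ⊓ G) (k : Ordinal) ∧
    iterate (fun G => GS p G ⊓ G) (k : Ordinal) = iterate (fun G => LS p G ⊓ G) (k : Ordinal) ∧
    iterate (fun G => LS p G ⊓ G) (k : Ordinal) = iterate (LS p) (k : Ordinal) ∧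
    ∀ i, (iterate (GS p) (k : Ordinal) i).Nonempty := by
  induction k with
  | zero =>
    rw [Nat.cast_zero, my_iterate_zero, my_iterate_zero, my_iterate_zero, my_iterate_zero]
    exact ⟨rfl, rfl, rfl, fun i => Set.univ_nonempty⟩
  | succ k ih =>
    obtain ⟨h1, h2, h3, hne⟩ := ih
    set X := iterate (GS p) (k : Ordinal) with hX
    have hGle : GS p X ≤ X := by
      have := GS_anti p k
      rwa [my_iterate_succ] at this
    have hLS : LS p X = GS p X := LS_eq_GS p X hne hGle
    have e1 : iterate (GS p) ((k + 1 : ℕ) : Ordinal) = GS p X := by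
      rw [Nat.cast_succ, my_iterate_succ]
    have e2 : iterate (fun G => GS p G ⊓ G) ((k + 1 : ℕ) : Ordinal) = GS p X := by
      rw [Nat.cast_succ, my_iterate_succ, ← h1, inf_eq_left.mpr hGle]
    have e3 : iterate (fun G => LS p G ⊓ G) ((k + 1 : ℕ) : Ordinal) = GS p X := by
      rw [Nat.cast_succ, my_iterate_succ, ← h2, ← h1, hLS, inf_eq_left.mpr hGle]
    have e4 : iterate (LS p) ((k + 1 : ℕ) : Ordinal) = GS p X := by
      rw [Nat.cast_succ, my_iterate_succ, ← h3, ← h2, ← h1, hLS]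
    refine ⟨by rw [e1, e2], by rw [e2, e3], by rw [e3, e4], ?_⟩
    intro i
    rw [e1]
    exact (key p X hne i).1

end Aux

set_option linter.unusedVariables false

theorem stmt_18 {n : ℕ} (hn : 2 ≤ n) {T : Fin n → Type u} [∀ i, Nonempty (T i)]
    [∀ i, Finite (T i)] (p : ∀ i : Fin n, (∀ j, T j) → ℝ) :
    (∀ k : ℕ,
      iterate (GS p) (k : Ordinal.{0}) = iterate (fun G => GS p G ⊓ G) (k : Ordinal) ∧
      iterate (fun G => GS p G ⊓ G) (k : Ordinal) = iterate (fun G => LS p G ⊓ G) (k : Ordinal) ∧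
      iterate (fun G => LS p G ⊓ G) (k : Ordinal) = iterate (LS p) (k : Ordinal)) ∧
    ∃ k : ℕ,
      iterate (GS p) ((k : Ordinal.{0}) + 1) = iterate (GS p) (k : Ordinal) ∧
      iterate (fun G => GS p G ⊓ G) ((k : Ordinal) + 1) = iterate (fun G => GS p G ⊓ G) (k : Ordinal) ∧
      iterate (fun G => LS p G ⊓ G) ((k : Ordinal) + 1) = iterate (fun G => LS p G ⊓ G) (k : Ordinal) ∧
      iterate (LS p) ((k : Ordinal) + 1) = iterate (LS p) (k : Ordinal) := by
  have main := main_lemma p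
  refine ⟨fun k => ⟨(main k).1, (main k).2.1, (main k).2.2.1⟩, ?_⟩
  have hant : Antitone (fun k : ℕ => iterate (GS p) (k : Ordinal)) := by
    apply antitone_nat_of_succ_le
    intro m
    have := GS_anti p m
    rwa [← Nat.cast_succ] at this
  obtain ⟨a, b, hab, heq⟩ :=
    Finite.exists_ne_map_eq_of_infinite (fun k : ℕ => iterate (GS p) (k : Ordinal))
  wlog hlt : a < b generalizing a b
  · exact this b a hab.symm heq.symm (hab.lt_or_gt.resolve_left hlt)
  have hstab : iterate (GS p) (((a + 1 : ℕ)) : Ordinal) = iterate (GS p) (a : Ordinal) := by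
    apply le_antisymm (hant (Nat.le_succ a))
    calc iterate (GS p) (a : Ordinal) = iterate (GS p) (b : Ordinal) := heq
      _ ≤ iterate (GS p) ((a + 1 : ℕ) : Ordinal) := hant hlt
  rw [Nat.cast_succ] at hstab
  refine ⟨a, hstab, ?_, ?_, ?_⟩
  · rw [← Nat.cast_succ, ← (main (a+1)).1, ← (main a).1, Nat.cast_succ, hstab]
  · rw [← Nat.cast_succ, ← (main (a+1)).2.1, ← (main (a+1)).1, ← (main a).2.1, ← (main a).1,
      Nat.cast_succ, hstab]
  · rw [← Nat.cast_succ, ← (main (a+1)).2.2.1, ← (main (a+1)).2.1, ← (main (a+1)).1,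
      ← (main a).2.2.1, ← (main a).2.1, ← (main a).1, Nat.cast_succ, hstab]
end
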